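/- Let A ∈ ℤ^{m×d}, and let b, b' ∈ ℕA satisfy 2·|𝓕_{A,b}| ≤ |𝓕_{A,b'+b}|. Then for any finite set 𝓜 ⊂ ker_ℤ(A) and every u ∈ 𝓕_{A,b'}, the edge-expansion of the fiber graph 𝓕_{A,b'+b}(𝓜) satisfies h(𝓕_{A,b'+b}(𝓜)) ≤ 2|𝓜| · |∂_𝓜^u(𝓕_{A,b})| / |𝓕_{A,b}|. -/
import Mathlib


/-- The fiber of `b` under `A`. -/
def fiber (m d : ℕ) (A : Matrix (Fin m) (Fin d) ℤ) (b : Fin m → ℤ) : Set (Fin d → ℤ) :=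
  {u | (∀ j, 0 ≤ u j) ∧ A.mulVec u = b}

/-- The symmetrized move set `±𝓜`. -/
def pmSet (d : ℕ) (M : Finset (Fin d → ℤ)) : Set (Fin d → ℤ) :=
  (M : Set (Fin d → ℤ)) ∪ (-(M : Set (Fin d → ℤ)))

/-- The number of edges of the fiber graph on `F` with moves `Mv` leaving `S ⊆ F`. -/
noncomputable def edgesOut (d : ℕ) (F S Mv : Set (Fin d → ℤ)) : ℕ :=
  Set.ncard {p : (Fin d → ℤ) × (Fin d → ℤ) | p.1 ∈ S ∧ p.2 ∈ Mv ∧ p.1 + p.2 ∈ F \ S}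

/-- The edge-expansion of the fiber graph on `F` with moves `Mv`. -/
noncomputable def expansion (d : ℕ) (F Mv : Set (Fin d → ℤ)) : ℝ :=
  sInf {x : ℝ | ∃ S : Set (Fin d → ℤ), S ⊆ F ∧ 0 < S.ncard ∧ 2 * S.ncard ≤ F.ncard ∧
    x = (edgesOut d F S Mv : ℝ) / (S.ncard : ℝ)}

/-- The `u`-boundary of `F` with respect to the moves `Mv`. -/
def boundary (d : ℕ) (F Mv : Set (Fin d → ℤ)) (u : Fin d → ℤ) : Set (Fin d → ℤ) :=
  {v | (∃ w ∈ F, v = u + w) ∧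
    ∃ mv ∈ Mv, (∀ j, 0 ≤ v j + mv j) ∧ ¬ ∃ w ∈ F, v + mv = u + w}

lemma ncard_prod_aux {α β : Type*} {s : Set α} {t : Set β} (hs : s.Finite) (ht : t.Finite) :
    (s ×ˢ t).ncard = s.ncard * t.ncard := by
  rw [← Nat.card_coe_set_eq, ← Nat.card_coe_set_eq, ← Nat.card_coe_set_eq,
    Nat.card_congr (Equiv.Set.prod s t), Nat.card_prod]

/-- If `2|𝓕_{A,b}| ≤ |𝓕_{A,b'+b}|`, then the edge-expansion of `𝓕_{A,b'+b}(𝓜)` is at most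
`2|𝓜| · |∂_𝓜^u(𝓕_{A,b})| / |𝓕_{A,b}|` for any `u ∈ 𝓕_{A,b'}`. -/
theorem stmt5 (m d : ℕ) (A : Matrix (Fin m) (Fin d) ℤ)
    (b b' : Fin m → ℤ)
    (hb : (fiber m d A b).Nonempty)
    (M : Finset (Fin d → ℤ)) (hM : ∀ v ∈ M, A.mulVec v = 0)
    (hsize : 2 * (fiber m d A b).ncard ≤ (fiber m d A (b' + b)).ncard)
    (u : Fin d → ℤ) (hu : u ∈ fiber m d A b') :
    expansion d (fiber m d A (b' + b)) (pmSet d M) ≤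
      2 * (M.card : ℝ) * ((boundary d (fiber m d A b) (pmSet d M) u).ncard : ℝ) /
        ((fiber m d A b).ncard : ℝ) := by
  set Fb := fiber m d A b with hFb
  set F := fiber m d A (b' + b) with hF
  set Mv := pmSet d M with hMv
  -- translation image
  set S : Set (Fin d → ℤ) := (fun w => u + w) '' Fb with hSdef
  have hinj : Function.Injective (fun w : Fin d → ℤ => u + w) := fun a c h => by
    simpa using h
  have hScard : S.ncard = Fb.ncard := Set.ncard_image_of_injective _ hinj
  have hSsub : S ⊆ F := by
    rintro x ⟨w, hw, rfl⟩
    refine ⟨fun j => add_nonneg (hu.1 j) (hw.1 j), ?_⟩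
    rw [Matrix.mulVec_add, hu.2, hw.2]
  by_cases hfin : Fb.Finite
  · -- main case
    have hFb0 : 0 < Fb.ncard := (Set.ncard_pos hfin).mpr hb
    have hFfin : F.Finite := by
      by_contra h
      rw [Set.Infinite.ncard h] at hsize
      omega
    have hMvfin : Mv.Finite := (M.finite_toSet).union (M.finite_toSet.neg)
    set B := boundary d Fb Mv u with hB
    have hBsub : B ⊆ S := by
      rintro v ⟨⟨w, hw, rfl⟩, _⟩
      exact ⟨w, hw, rfl⟩
    have hBfin : B.Finite := (hfin.image _).subset hBsub
    -- edge set inclusion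
    set E : Set ((Fin d → ℤ) × (Fin d → ℤ)) :=
      {p | p.1 ∈ S ∧ p.2 ∈ Mv ∧ p.1 + p.2 ∈ F \ S} with hE
    have hEsub : E ⊆ B ×ˢ Mv := by
      rintro ⟨v, mv⟩ ⟨hvS, hmv, hin, hout⟩
      refine ⟨⟨?_, mv, hmv, fun j => hin.1 j, ?_⟩, hmv⟩
      · obtain ⟨w, hw, rfl⟩ := hvS; exact ⟨w, hw, rfl⟩
      · rintro ⟨w, hw, hvw⟩; exact hout ⟨w, hw, hvw.symm⟩
    have hMvcard : Mv.ncard ≤ 2 * M.card := by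
      calc Mv.ncard ≤ (M : Set (Fin d → ℤ)).ncard + (-(M : Set (Fin d → ℤ))).ncard :=
            Set.ncard_union_le _ _
        _ ≤ 2 * M.card := by
            rw [← Set.image_neg_eq_neg, Set.ncard_image_of_injective _ neg_injective,
              Set.ncard_coe_finset]
            omega
    have hEcard : edgesOut d F S Mv ≤ 2 * M.card * B.ncard := by
      have h1 : E.ncard ≤ (B ×ˢ Mv).ncard :=
        Set.ncard_le_ncard hEsub (hBfin.prod hMvfin)
      rw [ncard_prod_aux hBfin hMvfin] at h1
      calc edgesOut d F S Mv = E.ncard := rfl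
        _ ≤ B.ncard * Mv.ncard := h1
        _ ≤ B.ncard * (2 * M.card) := Nat.mul_le_mul_left _ hMvcard
        _ = 2 * M.card * B.ncard := Nat.mul_comm _ _
    -- expansion ≤ edgesOut / |S|
    have hmem : (edgesOut d F S Mv : ℝ) / (S.ncard : ℝ) ∈
        {x : ℝ | ∃ S : Set (Fin d → ℤ), S ⊆ F ∧ 0 < S.ncard ∧ 2 * S.ncard ≤ F.ncard ∧
          x = (edgesOut d F S Mv : ℝ) / (S.ncard : ℝ)} :=
      ⟨S, hSsub, hScard ▸ hFb0, hScard ▸ hsize, rfl⟩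
    have hbdd : BddBelow {x : ℝ | ∃ S : Set (Fin d → ℤ), S ⊆ F ∧ 0 < S.ncard ∧
        2 * S.ncard ≤ F.ncard ∧ x = (edgesOut d F S Mv : ℝ) / (S.ncard : ℝ)} := by
      refine ⟨0, ?_⟩
      rintro x ⟨T, _, _, _, rfl⟩
      positivity
    have h1 : expansion d F Mv ≤ (edgesOut d F S Mv : ℝ) / (S.ncard : ℝ) :=
      csInf_le hbdd hmem
    refine h1.trans ?_
    rw [hScard]
    have hnum : (edgesOut d F S Mv : ℝ) ≤ 2 * (M.card : ℝ) * (B.ncard : ℝ) := by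
      exact_mod_cast hEcard
    gcongr
  · -- Fb infinite
    have hFinf : F.Infinite := ((hfin |> Set.Infinite.mono (subset_refl _)) |>.image
      (Set.injOn_of_injective hinj)).mono hSsub
    have hFb0 : Fb.ncard = 0 := Set.Infinite.ncard hfin
    have hempty : {x : ℝ | ∃ S : Set (Fin d → ℤ), S ⊆ F ∧ 0 < S.ncard ∧
        2 * S.ncard ≤ F.ncard ∧ x = (edgesOut d F S Mv : ℝ) / (S.ncard : ℝ)} = ∅ := by
      ext x
      simp only [Set.mem_setOf_eq, Set.mem_empty_iff_false, iff_false]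
      rintro ⟨T, _, hT1, hT2, _⟩
      rw [Set.Infinite.ncard hFinf] at hT2
      omega
    rw [expansion, hempty, Real.sInf_empty, hFb0]
    simp
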